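/- The iteration Γ_k from the original GSTE algorithm coincides with the iteration Δ_k = F̂_Σ^k(⊤) for all k ≥ 1, and hence both stabilize at the same fixpoint: Γ_* = Δ_* = gfp(F̂_Σ). -/

import Mathlib

inductive V : Type
  | zero | one | X | T
deriving DecidableEq

instance instFintypeV : Fintype V where
  elems := {V.zero, V.one, V.X, V.T}
  complete := fun x => by cases x <;> simp

def vleB : V → V → Bool := fun a b =>
  a = b || a = V.X || b = V.T

def vlub : V → V → V
  | V.X, b => b
  | a, V.X => a
  | a, b => if a = b then a else V.T

def vglb : V → V → V
  | V.T, b => b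
  | a, V.T => a
  | a, b => if a = b then a else V.X

instance : LE V := ⟨fun a b => vleB a b = true⟩
instance : DecidableRel (α := V) (· ≤ ·) := fun a b => inferInstanceAs (Decidable (vleB a b = true))

instance : Lattice V where
  le := (· ≤ ·)
  le_refl := by decide
  le_trans := by decide
  le_antisymm := by decide
  sup := vlub
  le_sup_left := by decide
  le_sup_right := by decide
  sup_le := by decide
  inf := vglb
  inf_le_left := by decide
  inf_le_right := by decide
  le_inf := by decide

instance : BoundedOrder V where
  top := V.T
  le_top := by decide
  bot := V.X
  bot_le := by decide

def vand : V → V → V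
  | V.T, _ => V.T
  | _, V.T => V.T
  | V.zero, _ => V.zero
  | _, V.zero => V.zero
  | V.one, V.one => V.one
  | _, _ => V.X

def vor : V → V → V
  | V.T, _ => V.T
  | _, V.T => V.T
  | V.one, _ => V.one
  | _, V.one => V.one
  | V.zero, V.zero => V.zero
  | _, _ => V.X

def vnot : V → V
  | V.zero => V.one
  | V.one => V.zero
  | V.X => V.X
  | V.T => V.T


/-- `nextf regIn s` propagates register inputs to register outputs:
a register output `n` with register input `n'` receives `s n'`; all other
nodes receive X. -/
def nextf {Node : Type} (regIn : Node → Option Node) (s : Node → V) : Node → V :=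
  fun n => (regIn n).elim V.X s

/-- The closure function for sequences induced by a closure function `F`:
`F→(σ)(0) = F(σ(0))`, `F→(σ)(t+1) = F(σ(t+1) ⊔ next(F→(σ)(t)))`. -/
def Fseq {Node : Type} (F : (Node → V) → (Node → V)) (regIn : Node → Option Node)
    (σ : ℕ → Node → V) : ℕ → Node → V
  | 0 => F (σ 0)
  | t + 1 => F (σ (t + 1) ⊔ nextf regIn (Fseq F regIn σ t))

/-- The one-step function `F̂_Σ` on sequence graphs of a fixed finite shape:
`F̂_Σ(Δ)(e) = F(Σ(e))` for initial edges `e`, and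
`F̂_Σ(Δ)(e) = F(Σ(e) ⊔ ⨅_{i ∈ in(e)} next(Δ(i)))` otherwise. -/
def Fhat {Node E : Type} [DecidableEq E]
    (F : (Node → V) → (Node → V)) (regIn : Node → Option Node)
    (initial : E → Bool) (ine : E → Finset E)
    (Sg : E → Node → V) (Δ : E → Node → V) : E → Node → V :=
  fun e =>
    if initial e then F (Sg e)
    else F (Sg e ⊔ (ine e).inf fun i => nextf regIn (Δ i))

/-- `x` is the greatest fixpoint of `f`. -/
def IsGfp {α : Type*} [Preorder α] (f : α → α) (x : α) : Prop :=
  f x = x ∧ ∀ y, f y = y → y ≤ x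

/-!
Splitting off the initial edges, `F̂_Σ(Δ) = Γ₀ ⊓ U(Δ)` where `U(Δ)(e) = F(Σ(e) ⊔ ⨅ next(Δ(i)))`
is the unguarded update: for an initial edge `F(Σ(e)) ≤ U(Δ)(e)` by monotonicity of `F`.
Hence `Γ_{k+1} = Γ₀ ⊓ U(Δ₀) ⊓ ⋯ ⊓ U(Δ_k)`, and since the `Δ_k` decrease and `U` is monotone
the last meet term dominates, leaving `Γ₀ ⊓ U(Δ_k) = Δ_{k+1}`. The Kleene iteration of a monotone
map from `⊤` in a finite lattice is a decreasing chain, so it stabilizes, and its limit lies above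
every fixpoint.
-/

section KleeneFromTop

variable {α : Type*} [PartialOrder α] [OrderTop α] {f : α → α} {d : ℕ → α}

theorem antitone_of_iterate_from_top (hf : Monotone f) (h0 : d 0 = ⊤)
    (hS : ∀ k, d (k + 1) = f (d k)) : Antitone d := by
  refine antitone_nat_of_succ_le fun k => ?_
  induction k with
  | zero => exact h0 ▸ le_top
  | succ k ih => rw [hS (k + 1), hS k]; exact hf (hS k ▸ ih)

theorem le_of_iterate_from_top (hf : Monotone f) (h0 : d 0 = ⊤)
    (hS : ∀ k, d (k + 1) = f (d k)) {y : α} (hy : f y = y) (k : ℕ) : y ≤ d k := by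
  induction k with
  | zero => exact h0 ▸ le_top
  | succ k ih => rw [hS k, ← hy]; exact hf ih

theorem exists_isGfp_of_iterate_from_top [WellFoundedLT α] (hf : Monotone f) (h0 : d 0 = ⊤)
    (hS : ∀ k, d (k + 1) = f (d k)) :
    ∃ N, (∀ k, N ≤ k → d k = d N) ∧ IsGfp f (d N) := by
  obtain ⟨N, hN⟩ := WellFoundedLT.antitone_chain_condition (antitone_of_iterate_from_top hf h0 hS)
  refine ⟨N, fun k hk => (hN k hk).symm, ?_, fun y hy => le_of_iterate_from_top hf h0 hS hy N⟩
  exact (hS N).symm.trans (hN (N + 1) N.le_succ).symm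

end KleeneFromTop

theorem eq_of_inf_update {α : Type*} [SemilatticeInf α] {u : α → α} (hu : Monotone u)
    {c : α} {d g : ℕ → α} (hd : Antitone d) (hdS : ∀ k, d (k + 1) = c ⊓ u (d k))
    (hg0 : g 0 = c) (hgS : ∀ k, g (k + 1) = g k ⊓ u (d k)) (k : ℕ) :
    g (k + 1) = d (k + 1) := by
  induction k with
  | zero => rw [hgS, hg0, hdS]
  | succ k ih =>
    calc g (k + 2) = c ⊓ (u (d k) ⊓ u (d (k + 1))) := by rw [hgS, ih, hdS k, inf_assoc]
      _ = d (k + 2) := by rw [inf_eq_right.mpr (hu (hd k.le_succ)), ← hdS (k + 1)]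

section GSTE

variable {Node E : Type} (F : (Node → V) → (Node → V)) (regIn : Node → Option Node)
  (initial : E → Bool) (ine : E → Finset E) (Sg : E → Node → V)

def gsteInit : E → Node → V := fun e => if initial e then F (Sg e) else ⊤

def gsteUpdate (Δ : E → Node → V) : E → Node → V :=
  fun e => F (Sg e ⊔ (ine e).inf fun i => nextf regIn (Δ i))

theorem nextf_mono : Monotone (nextf regIn) := fun _ _ h n => by
  unfold nextf
  cases regIn n with
  | none => exact le_rfl
  | some m => exact h m

variable {F}

theorem gsteUpdate_mono (hmono : ∀ s t : Node → V, s ≤ t → F s ≤ F t) :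
    Monotone (gsteUpdate F regIn ine Sg) := fun _ _ h _ =>
  hmono _ _ <| sup_le_sup_left (Finset.inf_mono_fun fun i _ => nextf_mono regIn (h i)) _

theorem Fhat_eq_gsteInit_inf_gsteUpdate [DecidableEq E]
    (hmono : ∀ s t : Node → V, s ≤ t → F s ≤ F t) (Δ : E → Node → V) :
    Fhat F regIn initial ine Sg Δ = gsteInit F initial Sg ⊓ gsteUpdate F regIn ine Sg Δ := by
  funext e
  by_cases he : initial e
  · simp only [Fhat, gsteInit, gsteUpdate, he, if_true, Pi.inf_apply]
    exact (inf_eq_left.mpr (hmono _ _ le_sup_left)).symm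
  · simp [Fhat, gsteInit, gsteUpdate, he]

theorem Fhat_mono [DecidableEq E] (hmono : ∀ s t : Node → V, s ≤ t → F s ≤ F t) :
    Monotone (Fhat F regIn initial ine Sg) := fun _ _ h => by
  simp only [Fhat_eq_gsteInit_inf_gsteUpdate regIn initial ine Sg hmono]
  exact inf_le_inf_left _ (gsteUpdate_mono regIn ine Sg hmono h)

end GSTE

theorem Gamma_eq_Delta_general {Node E : Type} [DecidableEq E] [Fintype E] [Fintype Node]
    (F : (Node → V) → (Node → V)) (regIn : Node → Option Node)
    (initial : E → Bool) (ine : E → Finset E)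
    (hmono : ∀ s t : Node → V, s ≤ t → F s ≤ F t)
    (Sg : E → Node → V)
    (Del Gam : ℕ → E → Node → V)
    (hDel0 : Del 0 = ⊤)
    (hDelS : ∀ k, Del (k + 1) = Fhat F regIn initial ine Sg (Del k))
    (hGam0 : ∀ e, Gam 0 e = if initial e then F (Sg e) else ⊤)
    (hGamS : ∀ k e, Gam (k + 1) e =
      Gam k e ⊓ F (Sg e ⊔ (ine e).inf fun i => nextf regIn (Del k i))) :
    (∀ k, 1 ≤ k → Gam k = Del k) ∧
      ∃ N, (∀ k, N ≤ k → Del k = Del N ∧ Gam k = Del N) ∧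
        IsGfp (Fhat F regIn initial ine Sg) (Del N) := by
  have hFhat := Fhat_mono regIn initial ine Sg hmono
  have hGamDel : ∀ k, Gam (k + 1) = Del (k + 1) :=
    eq_of_inf_update (gsteUpdate_mono regIn ine Sg hmono)
      (antitone_of_iterate_from_top hFhat hDel0 hDelS)
      (fun k => (hDelS k).trans (Fhat_eq_gsteInit_inf_gsteUpdate regIn initial ine Sg hmono _))
      (funext hGam0) (fun k => funext (hGamS k))
  have hGamDel' : ∀ k, 1 ≤ k → Gam k = Del k := fun k hk => by
    obtain ⟨j, rfl⟩ := Nat.exists_eq_add_of_le' hk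
    exact hGamDel j
  obtain ⟨N, hstable, hgfp⟩ := exists_isGfp_of_iterate_from_top hFhat hDel0 hDelS
  have hN : Del (N + 1) = Del N := hstable (N + 1) N.le_succ
  refine ⟨hGamDel', N + 1, fun k hk => ?_, hN ▸ hgfp⟩
  have hk' : Del k = Del (N + 1) := (hstable k (by omega)).trans hN.symm
  exact ⟨hk', (hGamDel' k (by omega)).trans hk'⟩

/-- The iteration `Γ_k` from the original GSTE algorithm coincides with the iteration
`Δ_k = F̂_Σ^k(⊤)` for all `k ≥ 1`, and both stabilize at the greatest fixpoint of
`F̂_Σ`. -/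
theorem Gamma_eq_Delta {Node E : Type} [DecidableEq E] [Fintype E] [Fintype Node]
    (F : (Node → V) → (Node → V)) (regIn : Node → Option Node)
    (initial : E → Bool) (ine : E → Finset E)
    (hmono : ∀ s t : Node → V, s ≤ t → F s ≤ F t)
    (hidem : ∀ s : Node → V, F (F s) = F s)
    (hext : ∀ s : Node → V, s ≤ F s)
    (Sg : E → Node → V)
    (Del Gam : ℕ → E → Node → V)
    (hDel0 : Del 0 = ⊤)
    (hDelS : ∀ k, Del (k + 1) = Fhat F regIn initial ine Sg (Del k))
    (hGam0 : ∀ e, Gam 0 e = if initial e then F (Sg e) else ⊤)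
    (hGamS : ∀ k e, Gam (k + 1) e =
      Gam k e ⊓ F (Sg e ⊔ (ine e).inf fun i => nextf regIn (Del k i))) :
    (∀ k, 1 ≤ k → Gam k = Del k) ∧
      ∃ N, (∀ k, N ≤ k → Del k = Del N ∧ Gam k = Del N) ∧
        IsGfp (Fhat F regIn initial ine Sg) (Del N) :=
  Gamma_eq_Delta_general F regIn initial ine hmono Sg Del Gam hDel0 hDelS hGam0 hGamS
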